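/- Let S be a finite type, let p, q : S → ℝ be probability distributions (nonnegative, each summing to 1), and let b, l ∈ [0, 1] with D := (1 − b)·l + b > 0. Define the mixture distribution r : S → ℝ by r(s) = ((1 − b)·l·p(s) + b·q(s)) / D. Then the total variation distance satisfies (1/2) ∑_{s ∈ S} |p(s) − r(s)| ≤ b / D. (The bound on the variation distance between the noiseless output distribution and the accepted noisy output distribution, from which Equation (1) of the paper follows.) -/
import Mathlib


/-- **Variation-distance bound for accepted outputs.** If `p, q` are probability
distributions on a finite type `S`, `b, l ∈ [0,1]`, `D = (1−b)l + b > 0`, and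
`r = ((1−b)l·p + b·q)/D` is the accepted mixture distribution, then
`(1/2) ∑_s |p s − r s| ≤ b / D`. -/
theorem variation_distance_bound {S : Type*} [Fintype S] (p q : S → ℝ)
    (hp0 : ∀ s, 0 ≤ p s) (hq0 : ∀ s, 0 ≤ q s)
    (hp1 : ∑ s, p s = 1) (hq1 : ∑ s, q s = 1)
    (b l : ℝ) (hb : b ∈ Set.Icc (0 : ℝ) 1) (hl : l ∈ Set.Icc (0 : ℝ) 1)
    (hD : 0 < (1 - b) * l + b)
    (r : S → ℝ)
    (hr : ∀ s, r s = ((1 - b) * l * p s + b * q s) / ((1 - b) * l + b)) :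
    (1 / 2) * ∑ s, |p s - r s| ≤ b / ((1 - b) * l + b) := by
  set D := (1 - b) * l + b with hDdef
  have hb0 : 0 ≤ b := hb.1
  have key : ∀ s, |p s - r s| = b / D * |p s - q s| := by
    intro s
    have : p s - r s = b / D * (p s - q s) := by
      rw [hr s]; field_simp; ring
    rw [this, abs_mul, abs_of_nonneg (div_nonneg hb0 hD.le)]
  calc (1 / 2) * ∑ s, |p s - r s| = (1 / 2) * (b / D) * ∑ s, |p s - q s| := by
        simp_rw [key, ← Finset.mul_sum]; ring
    _ ≤ (1 / 2) * (b / D) * ∑ s, (p s + q s) := by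
        apply mul_le_mul_of_nonneg_left _ (by positivity)
        exact Finset.sum_le_sum fun s _ => (abs_sub _ _).trans (by
          rw [abs_of_nonneg (hp0 s), abs_of_nonneg (hq0 s)])
    _ = b / D := by rw [Finset.sum_add_distrib, hp1, hq1]; ring
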